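/- arXiv:1003.3297 — 2 statements merged into one kernel-verified Lean document; each statement's English description precedes it below -/
import Mathlib

section
/- For positive integers w1, w2, any y ∈ R and n ≥ 0: w2 · w1^{n−1}·w1 · Σ_{i=0}^{w1−1} q^{w2·i} · B_{n,q^{w1}}(w2·y + (w2/w1)·i) = w1 · w2^{n−1}·w2 · Σ_{i=0}^{w2−1} q^{w1·i} · B_{n,q^{w2}}(w1·y + (w1/w2)·i); equivalently w2·w1^n·Σ_{i<w1} q^{w2 i} B_{n,q^{w1}}(w2 y + w2 i/w1) = w1·w2^n·Σ_{i<w2} q^{w1 i} B_{n,q^{w2}}(w1 y + w1 i/w2). -/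
open Finset

/-- The q-analogue of power sums: `S_{k,q}(m) = Σ_{i=0}^m i^k q^i` (with `0^0 = 1`). -/
def qS {R : Type*} [CommRing R] (q : R) (k m : ℕ) : R :=
  ∑ i ∈ Finset.range (m + 1), (i : R) ^ k * q ^ i

/-- q-Bernoulli numbers `b_n(q, L)`: `(q-1) b_0 = L` and for `n ≥ 1`,
`(q-1) b_n = [n = 1] - q Σ_{k<n} C(n,k) b_k`. -/
noncomputable def qb {R : Type*} [CommRing R] (q L : R) : ℕ → R
  | 0 => Ring.inverse (q - 1) * L
  | n + 1 =>
      Ring.inverse (q - 1) *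
        ((if n + 1 = 1 then (1 : R) else 0) -
          q * ∑ k ∈ (Finset.range (n + 1)).attach,
              ((n + 1).choose k.1 : R) * qb q L k.1)
  termination_by n => n
  decreasing_by exact Finset.mem_range.mp k.2

/-- q-Bernoulli polynomials `B_{n,q}(x) = Σ_{k=0}^n C(n,k) b_k(q,L) x^{n-k}`. -/
noncomputable def qB {R : Type*} [CommRing R] (q L : R) (n : ℕ) (x : R) : R :=
  ∑ k ∈ Finset.range (n + 1), (n.choose k : R) * qb q L k * x ^ (n - k)

/-! When `q - 1` is invertible, the q-Bernoulli numbers are the unique sequence whose Appell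
polynomials satisfy `q B_k(1) - B_k(0) = [k = 1] + L [k = 0]`. The weighted sums
`Σ_{i<w} q^i D_k(i)` of the Appell polynomials `D_k` of `m ↦ b_m(q^w, wL) w^m` telescope to a sequence
satisfying the same equation multiplied by `w`, which yields the multiplication theorem
`w B_{n,q}(wz) = w^n Σ_{i<w} q^i B_{n,q^w}(z + i/w)`. Applied to `B_{n,q^{w₁}}` with factor `w₂`, it
turns each side of the theorem into the double sum
`(w₁ w₂)^n Σ_{i<w₁} Σ_{j<w₂} q^{w₂ i + w₁ j} B_{n,q^{w₁w₂}}(y + i/w₁ + j/w₂)`, which is symmetric. -/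

section

variable {R : Type*} [CommRing R]

noncomputable def appellPoly (a : ℕ → R) (n : ℕ) (x : R) : R :=
  ∑ k ∈ range (n + 1), (n.choose k : R) * a k * x ^ (n - k)

theorem qB_eq_appellPoly (q L : R) : qB q L = appellPoly (qb q L) := rfl

theorem appellPoly_zero (a : ℕ → R) (n : ℕ) : appellPoly a n 0 = a n := by
  rw [appellPoly, sum_range_succ, sum_eq_zero fun k hk => ?_]
  · simp
  · rw [zero_pow (Nat.sub_ne_zero_of_lt (mem_range.mp hk)), mul_zero]

theorem appellPoly_const_mul (c : R) (a : ℕ → R) (n : ℕ) (x : R) :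
    appellPoly (fun k => c * a k) n x = c * appellPoly a n x := by
  simp only [appellPoly, mul_sum]
  exact sum_congr rfl fun _ _ => by ring

theorem appellPoly_sum {ι : Type*} (s : Finset ι) (a : ι → ℕ → R) (n : ℕ) (x : R) :
    appellPoly (fun k => ∑ i ∈ s, a i k) n x = ∑ i ∈ s, appellPoly (a i) n x := by
  simp only [appellPoly, mul_sum, sum_mul]
  exact sum_comm

theorem appellPoly_pow_mul (a : ℕ → R) (n : ℕ) (c x : R) :
    appellPoly (fun k => a k * c ^ k) n (c * x) = c ^ n * appellPoly a n x := by
  simp only [appellPoly, mul_sum]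
  refine sum_congr rfl fun k hk => ?_
  have hcn : c ^ k * c ^ (n - k) = c ^ n := by
    rw [← pow_add, Nat.add_sub_cancel' (Nat.lt_succ_iff.mp (mem_range.mp hk))]
  rw [mul_pow]
  linear_combination (n.choose k * a k * x ^ (n - k) : R) * hcn

theorem appellPoly_add (a : ℕ → R) (n : ℕ) (x y : R) :
    appellPoly a n (x + y) = appellPoly (fun k => appellPoly a k y) n x := by
  simp only [appellPoly, mul_sum, sum_mul]
  rw [sum_comm' (t' := range (n + 1)) (s' := fun m => Icc m n)
    (by intro k m; simp only [mem_range, mem_Icc]; omega)]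
  refine sum_congr rfl fun m hm => ?_
  rw [add_comm x, add_pow, mul_sum, ← Ico_add_one_right_eq_Icc, sum_Ico_eq_sum_range,
    Nat.sub_add_comm (Nat.lt_succ_iff.mp (mem_range.mp hm))]
  refine sum_congr rfl fun t _ => ?_
  have hchoose : (n.choose (m + t) : R) * (m + t).choose m = n.choose m * (n - m).choose t := by
    have := Nat.choose_mul (n := n) (Nat.le_add_right m t)
    rw [Nat.add_sub_cancel_left] at this
    simpa only [Nat.cast_mul] using congrArg (Nat.cast : ℕ → R) this
  rw [Nat.add_sub_cancel_left, ← Nat.sub_sub]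
  linear_combination -(a m * y ^ t * x ^ (n - m - t)) * hchoose

theorem appellPoly_one_eq (a : ℕ → R) (k : ℕ) :
    appellPoly a k 1 = ∑ j ∈ range k, (k.choose j : R) * a j + a k := by
  simp [appellPoly, sum_range_succ]

theorem sub_one_mul_qb_zero (q L : R) (hq : IsUnit (q - 1)) : (q - 1) * qb q L 0 = L := by
  rw [qb, ← mul_assoc, Ring.mul_inverse_cancel _ hq, one_mul]

theorem sub_one_mul_qb_succ (q L : R) (hq : IsUnit (q - 1)) (n : ℕ) :
    (q - 1) * qb q L (n + 1) =
      (if n + 1 = 1 then 1 else 0) - q * ∑ j ∈ range (n + 1), ((n + 1).choose j : R) * qb q L j := by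
  rw [qb, ← mul_assoc, Ring.mul_inverse_cancel _ hq, one_mul,
    sum_attach (range (n + 1)) fun j => ((n + 1).choose j : R) * qb q L j]

theorem qb_recurrence (q L : R) (hq : IsUnit (q - 1)) (k : ℕ) :
    q * appellPoly (qb q L) k 1 - qb q L k = (if k = 1 then 1 else 0) + (if k = 0 then L else 0) := by
  rw [appellPoly_one_eq]
  cases k with
  | zero => simpa [sub_mul] using sub_one_mul_qb_zero q L hq
  | succ n =>
    simp only [Nat.add_eq_zero_iff, one_ne_zero, and_false, if_false, add_zero]
    linear_combination sub_one_mul_qb_succ q L hq n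

theorem eq_of_mul_appellPoly_one_sub_eq {q : R} (hq : IsUnit (q - 1)) {c d : ℕ → R}
    (h : ∀ k, q * appellPoly c k 1 - c k = q * appellPoly d k 1 - d k) : c = d := by
  funext k
  induction k using Nat.strong_induction_on with
  | _ k ih =>
    have hsum : ∑ j ∈ range k, (k.choose j : R) * c j = ∑ j ∈ range k, (k.choose j : R) * d j :=
      sum_congr rfl fun j hj => by rw [ih j (mem_range.mp hj)]
    have hk := h k
    rw [appellPoly_one_eq, appellPoly_one_eq, hsum] at hk
    exact hq.mul_left_cancel (by linear_combination hk)

theorem mul_appellPoly_one_sub_of_weighted_sum (q : R) (a : ℕ → R) (w k : ℕ) :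
    q * appellPoly (fun j => ∑ i ∈ range w, q ^ i * appellPoly a j i) k 1
        - ∑ i ∈ range w, q ^ i * appellPoly a k i
      = q ^ w * appellPoly a k w - appellPoly a k 0 := by
  have hshift : ∀ i : ℕ, appellPoly (fun j => appellPoly a j i) k 1 = appellPoly a k (i + 1 : ℕ) := by
    intro i
    rw [← appellPoly_add, Nat.cast_succ, add_comm]
  simp only [appellPoly_sum, appellPoly_const_mul, hshift, mul_sum]
  rw [← sum_sub_distrib]
  convert sum_range_sub (fun i => q ^ i * appellPoly a k i) w using 2 with i
  · ring
  · simp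

theorem natCast_mul_qb_eq_sum (q L : R) {w : ℕ} (hq : IsUnit (q - 1)) (hqw : IsUnit (q ^ w - 1)) :
    (fun k => (w : R) * qb q L k) =
      fun k => ∑ i ∈ range w, q ^ i * appellPoly (fun m => qb (q ^ w) (w * L) m * (w : R) ^ m) k i := by
  refine eq_of_mul_appellPoly_one_sub_eq hq fun k => ?_
  have hw : appellPoly (fun m => qb (q ^ w) (w * L) m * (w : R) ^ m) k w =
      (w : R) ^ k * appellPoly (qb (q ^ w) (w * L)) k 1 := by
    simpa using appellPoly_pow_mul (qb (q ^ w) (w * L)) k (w : R) 1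
  have hrhs : (w : R) * ((if k = 1 then 1 else 0) + (if k = 0 then L else 0)) =
      (w : R) ^ k * ((if k = 1 then 1 else 0) + (if k = 0 then (w : R) * L else 0)) := by
    rcases k with _ | _ | k <;> simp
  rw [appellPoly_const_mul, mul_appellPoly_one_sub_of_weighted_sum, appellPoly_zero, hw]
  linear_combination (w : R) * qb_recurrence q L hq k - (w : R) ^ k * qb_recurrence _ _ hqw k + hrhs

theorem qB_multiplication (q L : R) {w : ℕ} (hq : IsUnit (q - 1)) (hqw : IsUnit (q ^ w - 1))
    (n : ℕ) (z : R) (c : ℕ → R) (hc : ∀ i : ℕ, (w : R) * c i = i) :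
    (w : R) * qB q L n (w * z) = (w : R) ^ n * ∑ i ∈ range w, q ^ i * qB (q ^ w) (w * L) n (z + c i) := by
  set a : ℕ → R := fun m => qb (q ^ w) (w * L) m * (w : R) ^ m
  have hscale (i : ℕ) : appellPoly a n (w * z + i) = (w : R) ^ n * qB (q ^ w) (w * L) n (z + c i) := by
    rw [← hc i, ← mul_add, qB_eq_appellPoly, ← appellPoly_pow_mul]
  calc (w : R) * qB q L n (w * z)
      = appellPoly (fun k => ∑ i ∈ range w, q ^ i * appellPoly a k i) n (w * z) := by
        rw [qB_eq_appellPoly, ← appellPoly_const_mul, natCast_mul_qb_eq_sum q L hq hqw]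
    _ = ∑ i ∈ range w, q ^ i * appellPoly a n (w * z + i) := by
        simp only [appellPoly_sum, appellPoly_const_mul, appellPoly_add]
    _ = (w : R) ^ n * ∑ i ∈ range w, q ^ i * qB (q ^ w) (w * L) n (z + c i) := by
        simp only [hscale, mul_sum, mul_left_comm]

theorem qB_weighted_sum_eq_double_sum [Algebra ℚ R] (q L : R) {a b : ℕ}
    (hqa : IsUnit (q ^ a - 1)) (hqab : IsUnit (q ^ (a * b) - 1)) (hb : 0 < b) (y : R) (n : ℕ) :
    (b : R) * (a : R) ^ n * ∑ i ∈ range a, q ^ (b * i) *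
        qB (q ^ a) (a * L) n (b * y + algebraMap ℚ R ((b : ℚ) * i / a))
      = (a : R) ^ n * (b : R) ^ n * ∑ i ∈ range a, ∑ j ∈ range b, q ^ (b * i + a * j) *
          qB (q ^ (a * b)) (a * b * L) n (y + algebraMap ℚ R ((i : ℚ) / a + (j : ℚ) / b)) := by
  have hdiv (j : ℕ) : (b : R) * algebraMap ℚ R ((j : ℚ) / b) = j := by
    rw [← map_natCast (algebraMap ℚ R), ← map_mul, mul_div_cancel₀ _ (by positivity), map_natCast]
  have harg (i : ℕ) : (b : R) * y + algebraMap ℚ R ((b : ℚ) * i / a) =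
      b * (y + algebraMap ℚ R ((i : ℚ) / a)) := by
    rw [mul_div_assoc, map_mul, map_natCast, mul_add]
  rw [pow_mul] at hqab
  calc (b : R) * (a : R) ^ n * ∑ i ∈ range a, q ^ (b * i) *
        qB (q ^ a) (a * L) n (b * y + algebraMap ℚ R ((b : ℚ) * i / a))
      = (a : R) ^ n * ∑ i ∈ range a, q ^ (b * i) *
          ((b : R) * qB (q ^ a) (a * L) n (b * (y + algebraMap ℚ R ((i : ℚ) / a)))) := by
        simp only [harg, mul_sum]
        exact sum_congr rfl fun _ _ => by ring
    _ = (a : R) ^ n * ∑ i ∈ range a, q ^ (b * i) * ((b : R) ^ n * ∑ j ∈ range b, (q ^ a) ^ j *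
          qB ((q ^ a) ^ b) (b * (a * L)) n
            (y + algebraMap ℚ R ((i : ℚ) / a) + algebraMap ℚ R ((j : ℚ) / b))) := by
        simp only [qB_multiplication (q ^ a) (a * L) hqa hqab n _ _ hdiv]
    _ = (a : R) ^ n * (b : R) ^ n * ∑ i ∈ range a, ∑ j ∈ range b, q ^ (b * i + a * j) *
          qB (q ^ (a * b)) (a * b * L) n (y + algebraMap ℚ R ((i : ℚ) / a + (j : ℚ) / b)) := by
        have hL : (b : R) * (a * L) = a * b * L := by ring
        simp only [mul_sum, ← pow_mul, pow_add, map_add, add_assoc, hL]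
        exact sum_congr rfl fun _ _ => sum_congr rfl fun _ _ => by ring

end

theorem symm_two_var_double {R : Type*} [CommRing R] [Algebra ℚ R] (q L : R)
    (hq : ∀ w : ℕ, 0 < w → IsUnit (q ^ w - 1)) (w1 w2 : ℕ) (hw1 : 0 < w1) (hw2 : 0 < w2) (y : R) (n : ℕ) :
    (w2 : R) * (w1 : R) ^ n * ∑ i ∈ Finset.range w1, q ^ (w2 * i) *
        qB (q ^ w1) ((w1 : R) * L) n ((w2 : R) * y + algebraMap ℚ R ((w2 : ℚ) * (i : ℚ) / (w1 : ℚ)))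
      = (w1 : R) * (w2 : R) ^ n * ∑ i ∈ Finset.range w2, q ^ (w1 * i) *
          qB (q ^ w2) ((w2 : R) * L) n ((w1 : R) * y + algebraMap ℚ R ((w1 : ℚ) * (i : ℚ) / (w2 : ℚ))) := by
  rw [qB_weighted_sum_eq_double_sum q L (hq w1 hw1) (hq _ (Nat.mul_pos hw1 hw2)) hw2,
    qB_weighted_sum_eq_double_sum q L (hq w2 hw2) (hq _ (Nat.mul_pos hw2 hw1)) hw1, sum_comm,
    mul_comm ((w2 : R) ^ n)]
  refine congrArg _ (sum_congr rfl fun i _ => sum_congr rfl fun j _ => ?_)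
  rw [add_comm (w2 * j), mul_comm w2 w1, mul_comm (w2 : R), add_comm ((i : ℚ) / w2)]
end

section
/- Six-fold symmetry (one instance): for positive integers w1, w2, w3 and y1, y2, y3 ∈ R, n ≥ 0: Σ_{k+l+m=n} (n choose k,l,m) · B_{k,q^{w2 w3}}(w1 y1) · B_{l,q^{w1 w3}}(w2 y2) · B_{m,q^{w1 w2}}(w3 y3) · w1^{l+m} · w2^{k+m} · w3^{k+l} = Σ_{k+l+m=n} (n choose k,l,m) · B_{k,q^{w1 w3}}(w2 y1) · B_{l,q^{w2 w3}}(w1 y2) · B_{m,q^{w1 w2}}(w3 y3) · w2^{l+m} · w1^{k+m} · w3^{k+l}. -/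
open Finset

/-!
Absorbing the weights, the `(k, l, m)` term is the trinomial convolution of the sequences
`u^j B_{j,q^u}(x)`. Since `B_{j,q^u}` is an Appell sequence, the exponential generating function of
`u^j B_{j,q^u}(x)` factors as `β_u(t) · exp(u x t)` with `β_u` the generating function of
`u^j b_j(q^u, u L)`. On both sides the products `u x` are `w1 w2 w3 y_i`, so the two triple products of
generating functions consist of the same six factors, in a different order.
-/

section Egf

open PowerSeries Nat

variable {R : Type*} [CommRing R] [Algebra ℚ R]

noncomputable def egf (a : ℕ → R) : R⟦X⟧ :=
  PowerSeries.mk fun n => algebraMap ℚ R (n ! : ℚ)⁻¹ * a n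

theorem coeff_egf (a : ℕ → R) (n : ℕ) : coeff n (egf a) = algebraMap ℚ R (n ! : ℚ)⁻¹ * a n :=
  coeff_mk _ _

theorem egf_injective : Function.Injective (egf (R := R)) := by
  intro a b h
  funext n
  have hn := congrArg (algebraMap ℚ R (n ! : ℚ) * coeff n ·) h
  have hfac : (n ! : ℚ) ≠ 0 := Nat.cast_ne_zero.2 n.factorial_ne_zero
  simpa only [coeff_egf, ← mul_assoc, ← map_mul, mul_inv_cancel₀ hfac, map_one, one_mul] using hn

theorem egf_mul (a b : ℕ → R) :
    egf a * egf b = egf fun n => ∑ k ∈ range (n + 1), (n.choose k : R) * a k * b (n - k) := by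
  ext n
  rw [coeff_mul, Finset.Nat.sum_antidiagonal_eq_sum_range_succ_mk, coeff_egf, mul_sum]
  refine sum_congr rfl fun k hk => ?_
  have hkn : k ≤ n := Nat.lt_succ_iff.mp (mem_range.mp hk)
  have hchoose : (n ! : ℚ)⁻¹ * n.choose k = (k ! : ℚ)⁻¹ * ((n - k)! : ℚ)⁻¹ := by
    rw [Nat.cast_choose ℚ hkn]
    field_simp
  have hchoose' := congrArg (algebraMap ℚ R) hchoose
  rw [map_mul, map_mul, map_natCast] at hchoose'
  simp only [coeff_egf]
  linear_combination -(a k * b (n - k)) * hchoose'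

theorem egf_mul_mul (a b c : ℕ → R) :
    egf a * egf b * egf c = egf fun n => ∑ k ∈ range (n + 1), ∑ l ∈ range (n - k + 1),
      ((n.choose k : R) * ((n - k).choose l : R)) * a k * b l * c (n - k - l) := by
  rw [mul_assoc, egf_mul b, egf_mul]
  congr 1
  funext n
  refine sum_congr rfl fun k _ => ?_
  rw [mul_sum]
  exact sum_congr rfl fun l _ => by ring

theorem trinomial_sum_eq_of_egf_eq {a b c a' b' c' : ℕ → R}
    (h : egf a * egf b * egf c = egf a' * egf b' * egf c') (n : ℕ) :
    ∑ k ∈ range (n + 1), ∑ l ∈ range (n - k + 1),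
        ((n.choose k : R) * ((n - k).choose l : R)) * a k * b l * c (n - k - l) =
      ∑ k ∈ range (n + 1), ∑ l ∈ range (n - k + 1),
        ((n.choose k : R) * ((n - k).choose l : R)) * a' k * b' l * c' (n - k - l) := by
  rw [egf_mul_mul, egf_mul_mul] at h
  exact congrFun (egf_injective h) n

theorem rescale_egf (u : R) (a : ℕ → R) : rescale u (egf a) = egf fun n => u ^ n * a n := by
  ext n
  rw [coeff_rescale, coeff_egf, coeff_egf]
  ring

theorem egf_qB (q L x : R) : egf (fun n => qB q L n x) = egf (qb q L) * egf fun n => x ^ n :=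
  (egf_mul _ _).symm

/-- `u^n B_{n,q^u}(x)`, with `B_{n,q^u}` taken for the parameters `(q^u, u L)`. -/
noncomputable def scaledQB (q L : R) (u : ℕ) (x : R) (n : ℕ) : R :=
  (u : R) ^ n * qB (q ^ u) ((u : R) * L) n x

theorem egf_scaledQB (q L : R) (u : ℕ) (x : R) :
    egf (scaledQB q L u x) =
      egf (fun n => (u : R) ^ n * qb (q ^ u) ((u : R) * L) n) * egf fun n => ((u : R) * x) ^ n := by
  change egf (fun n => (u : R) ^ n * qB (q ^ u) ((u : R) * L) n x) = _
  rw [← rescale_egf, egf_qB, map_mul, rescale_egf, rescale_egf]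
  simp only [mul_pow]

end Egf

theorem symm_six_fold_general {R : Type*} [CommRing R] [Algebra ℚ R] (q L : R)
    (w1 w2 w3 : ℕ) (y1 y2 y3 : R) (n : ℕ) :
    ∑ k ∈ Finset.range (n + 1), ∑ l ∈ Finset.range (n - k + 1),
        ((n.choose k : R) * ((n - k).choose l : R)) *
          qB (q ^ (w2 * w3)) (((w2 * w3 : ℕ) : R) * L) k ((w1 : R) * y1) *
          qB (q ^ (w1 * w3)) (((w1 * w3 : ℕ) : R) * L) l ((w2 : R) * y2) *
          qB (q ^ (w1 * w2)) (((w1 * w2 : ℕ) : R) * L) (n - k - l) ((w3 : R) * y3) *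
          (w1 : R) ^ (l + (n - k - l)) * (w2 : R) ^ (k + (n - k - l)) * (w3 : R) ^ (k + l)
      = ∑ k ∈ Finset.range (n + 1), ∑ l ∈ Finset.range (n - k + 1),
          ((n.choose k : R) * ((n - k).choose l : R)) *
            qB (q ^ (w1 * w3)) (((w1 * w3 : ℕ) : R) * L) k ((w2 : R) * y1) *
            qB (q ^ (w2 * w3)) (((w2 * w3 : ℕ) : R) * L) l ((w1 : R) * y2) *
            qB (q ^ (w1 * w2)) (((w1 * w2 : ℕ) : R) * L) (n - k - l) ((w3 : R) * y3) *
            (w2 : R) ^ (l + (n - k - l)) * (w1 : R) ^ (k + (n - k - l)) * (w3 : R) ^ (k + l) := by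
  have hx1 : ((w2 * w3 : ℕ) : R) * (w1 * y1) = ((w1 * w3 : ℕ) : R) * (w2 * y1) := by
    push_cast; ring
  have hx2 : ((w1 * w3 : ℕ) : R) * (w2 * y2) = ((w2 * w3 : ℕ) : R) * (w1 * y2) := by
    push_cast; ring
  have hegf : egf (scaledQB q L (w2 * w3) (w1 * y1)) * egf (scaledQB q L (w1 * w3) (w2 * y2)) *
        egf (scaledQB q L (w1 * w2) (w3 * y3)) =
      egf (scaledQB q L (w1 * w3) (w2 * y1)) * egf (scaledQB q L (w2 * w3) (w1 * y2)) *
        egf (scaledQB q L (w1 * w2) (w3 * y3)) := by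
    simp only [egf_scaledQB, hx1, hx2]
    ring
  refine Eq.trans ?_ ((trinomial_sum_eq_of_egf_eq hegf n).trans ?_) <;>
    refine sum_congr rfl fun k _ => sum_congr rfl fun l _ => ?_ <;>
    simp only [scaledQB] <;> push_cast <;> ring

theorem symm_six_fold {R : Type*} [CommRing R] [Algebra ℚ R] (q L : R)
    (hq : ∀ w : ℕ, 0 < w → IsUnit (q ^ w - 1)) (w1 w2 w3 : ℕ) (hw1 : 0 < w1) (hw2 : 0 < w2) (hw3 : 0 < w3) (y1 y2 y3 : R) (n : ℕ) :
    ∑ k ∈ Finset.range (n + 1), ∑ l ∈ Finset.range (n - k + 1),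
        ((n.choose k : R) * ((n - k).choose l : R)) *
          qB (q ^ (w2 * w3)) (((w2 * w3 : ℕ) : R) * L) k ((w1 : R) * y1) *
          qB (q ^ (w1 * w3)) (((w1 * w3 : ℕ) : R) * L) l ((w2 : R) * y2) *
          qB (q ^ (w1 * w2)) (((w1 * w2 : ℕ) : R) * L) (n - k - l) ((w3 : R) * y3) *
          (w1 : R) ^ (l + (n - k - l)) * (w2 : R) ^ (k + (n - k - l)) * (w3 : R) ^ (k + l)
      = ∑ k ∈ Finset.range (n + 1), ∑ l ∈ Finset.range (n - k + 1),
          ((n.choose k : R) * ((n - k).choose l : R)) *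
            qB (q ^ (w1 * w3)) (((w1 * w3 : ℕ) : R) * L) k ((w2 : R) * y1) *
            qB (q ^ (w2 * w3)) (((w2 * w3 : ℕ) : R) * L) l ((w1 : R) * y2) *
            qB (q ^ (w1 * w2)) (((w1 * w2 : ℕ) : R) * L) (n - k - l) ((w3 : R) * y3) *
            (w2 : R) ^ (l + (n - k - l)) * (w1 : R) ^ (k + (n - k - l)) * (w3 : R) ^ (k + l) :=
  symm_six_fold_general q L w1 w2 w3 y1 y2 y3 n
end
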